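/- Let f ∈ F₁(a,b) with a ≥ 0, let P be a probability measure on (Ω,M), and let Γ ⊂ M_b(Ω) be nonempty. Then for every g ∈ Γ, sup over all probability measures Q on (Ω,M) of {E_Q[g] − D_f^Γ(Q‖P)} equals Λ_f^P[g] = inf_{ν∈ℝ}{ν + E_P[f*(g−ν)]}. -/

import Mathlib

open MeasureTheory Filter Set Topology ENNReal
open scoped Classical

noncomputable section

/-- The set of bounded measurable real-valued functions on `Ω`. -/
def Mb (Ω : Type*) [MeasurableSpace Ω] : Set (Ω → ℝ) :=
  {g | Measurable g ∧ ∃ C : ℝ, ∀ x, |g x| ≤ C}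

/-- The set of bounded continuous real-valued functions on `S`. -/
def Cb (S : Type*) [TopologicalSpace S] : Set (S → ℝ) :=
  {g | Continuous g ∧ ∃ C : ℝ, ∀ x, |g x| ≤ C}

/-- The positive part of an extended real number, as an element of `ℝ≥0∞`. -/
def posE (x : EReal) : ℝ≥0∞ := if x = ⊤ then ⊤ else ENNReal.ofReal x.toReal

/-- The extended-real-valued integral of an `EReal`-valued function, defined as the
difference of the lower integrals of the positive and negative parts, with the
convention `∞ - ∞ = -∞`. -/
def eIntegral {Ω : Type*} [MeasurableSpace Ω] (P : Measure Ω) (h : Ω → EReal) : EReal :=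
  ((∫⁻ x, posE (h x) ∂P : ℝ≥0∞) : EReal) - ((∫⁻ x, posE (-(h x)) ∂P : ℝ≥0∞) : EReal)

/-- The Legendre transform `f*(y) = sup_x {x*y - f(x)}` of `f : ℝ → (-∞,∞]`. -/
def fstar (f : ℝ → EReal) (y : ℝ) : EReal := ⨆ x : ℝ, (((x * y : ℝ) : EReal) - f x)

/-- `f : ℝ → (-∞,∞]` is (the convex LSC extension of) an element of `F₁(a,b)`:
convex, lower semicontinuous, never `-∞`, finite exactly on the interval `(a,b)`
(with `+∞` strictly outside `[a,b]`), and `f(1) = 0` with `a < 1 < b`. -/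
structure IsF1 (a b : EReal) (f : ℝ → EReal) : Prop where
  a_lt_one : a < ((1 : ℝ) : EReal)
  one_lt_b : ((1 : ℝ) : EReal) < b
  convex : ∀ x y t : ℝ, 0 < t → t < 1 →
    f (t * x + (1 - t) * y) ≤ ((t : ℝ) : EReal) * f x + (((1 - t : ℝ)) : EReal) * f y
  lsc : LowerSemicontinuous f
  ne_bot : ∀ x, f x ≠ ⊥
  finite_on : ∀ x : ℝ, a < (x : EReal) → (x : EReal) < b → f x ≠ ⊤
  top_outside : ∀ x : ℝ, ((x : EReal) < a ∨ b < (x : EReal)) → f x = ⊤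
  at_one : f 1 = 0

/-- `Λ_f^P[g] = inf_{ν ∈ ℝ} {ν + E_P[f*(g - ν)]}`. -/
def LambdaF {Ω : Type*} [MeasurableSpace Ω] (f : ℝ → EReal) (P : Measure Ω) (g : Ω → ℝ) :
    EReal :=
  ⨅ ν : ℝ, ((ν : EReal) + eIntegral P (fun x => fstar f (g x - ν)))

/-- The classical `f`-divergence `D_f(Q‖P) = E_P[f(dQ/dP)]` if `Q ≪ P`, else `∞`. -/
def fDivE {Ω : Type*} [MeasurableSpace Ω] (f : ℝ → EReal) (Q P : Measure Ω) : EReal :=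
  if Q ≪ P then eIntegral P (fun x => f ((Q.rnDeriv P x).toReal)) else ⊤

/-- The `(f,Γ)`-divergence `D_f^Γ(Q‖P) = sup_{g ∈ Γ} {E_Q[g] - Λ_f^P[g]}`. -/
def fGammaDiv {Ω : Type*} [MeasurableSpace Ω] (f : ℝ → EReal) (Γ : Set (Ω → ℝ))
    (Q P : Measure Ω) : EReal :=
  ⨆ g ∈ Γ, (((∫ x, g x ∂Q : ℝ) : EReal) - LambdaF f P g)

/-- The `Γ`-IPM `W^Γ(Q,P) = sup_{g ∈ Γ} {E_Q[g] - E_P[g]}`. -/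
def ipmW {Ω : Type*} [MeasurableSpace Ω] (Γ : Set (Ω → ℝ)) (Q P : Measure Ω) : EReal :=
  ⨆ g ∈ Γ, (((∫ x, g x ∂Q : ℝ) : EReal) - ((∫ x, g x ∂P : ℝ) : EReal))

end

/-!
The inequality `≤` is immediate from the definition of `D_f^Γ`, because `g ∈ Γ`.

For `≥`, replace `g` by a step function `y` at scale `ε`, constant on the cells of a finite
partition of `Ω` with masses `p n`. The finite problem "maximise `∑ p n (τ n y n - f (τ n))` over
`τ` with `∑ p n τ n = c`" has a value that is concave in `c`, and a supergradient `ν` at `c = 1` is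
a Lagrange multiplier: `ν + ∑ p n f*(y n - ν)` is at most the value at `c = 1`. A near-optimal `τ`
is a probability density `Q = τ·P`, Young's inequality `τ z ≤ f(τ) + f*(z)` gives
`D_f^Γ(Q‖P) ≤ E_P[f(τ)]`, and so `E_Q[g] - D_f^Γ(Q‖P)` comes within `O(ε)` of `Λ_f^P[g]`.
-/

lemma EReal.coe_sub_le_of_coe_sub_le {r : ℝ} {x d : EReal} (h : (r : EReal) - x ≤ d) :
    (r : EReal) - d ≤ x := by
  induction x with
  | bot =>
    obtain rfl : d = ⊤ := top_le_iff.mp (by simpa using h)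
    simp
  | coe x =>
    exact EReal.sub_le_of_le_add'
      ((EReal.sub_le_iff_le_add (.inl (EReal.coe_ne_bot x)) (.inl (EReal.coe_ne_top x))).1 h)
  | top => exact le_top

lemma EReal.le_of_forall_pos_le_add_coe {x y : EReal} (h : ∀ ε : ℝ, 0 < ε → x ≤ y + ε) :
    x ≤ y := by
  refine EReal.le_of_forall_lt_iff_le.mp fun z hz => ?_
  induction y with
  | bot => simp [show x = ⊥ by simpa using h 1 one_pos]
  | coe y =>
    have hε : 0 < z - y := _root_.sub_pos.2 (EReal.coe_lt_coe_iff.1 hz)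
    simpa [← EReal.coe_sub, ← EReal.coe_add] using h (z - y) hε
  | top => simp at hz

lemma EReal.coe_toReal_sub_lt {x : EReal} (hx : x ≠ ⊥) {ε : ℝ} (hε : 0 < ε) :
    ((x.toReal - ε : ℝ) : EReal) < x := by
  induction x with
  | bot => exact absurd rfl hx
  | coe x => exact EReal.coe_lt_coe_iff.2 (by simp [hε])
  | top => exact EReal.coe_lt_top _

lemma posE_coe (r : ℝ) : posE r = ENNReal.ofReal r := by
  simp [posE]

lemma posE_mono : Monotone posE := by
  intro x y hxy
  by_cases hy : y = ⊤
  · simp [posE, hy]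
  have hx : x ≠ ⊤ := ne_top_of_le_ne_top hy hxy
  rcases eq_or_ne x ⊥ with rfl | hx'
  · simp [posE, hy]
  simp only [posE, if_neg hx, if_neg hy]
  exact ENNReal.ofReal_le_ofReal (EReal.toReal_le_toReal hxy hx' hy)

section eIntegral

variable {Ω : Type*} [MeasurableSpace Ω] {P : Measure Ω}

lemma eIntegral_mono {h₁ h₂ : Ω → EReal} (hle : ∀ x, h₁ x ≤ h₂ x) :
    eIntegral P h₁ ≤ eIntegral P h₂ :=
  EReal.sub_le_sub (by exact_mod_cast lintegral_mono fun x => posE_mono (hle x))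
    (by exact_mod_cast lintegral_mono fun x => posE_mono (EReal.neg_le_neg_iff.mpr (hle x)))

lemma eIntegral_congr_ae {h₁ h₂ : Ω → EReal} (h : h₁ =ᵐ[P] h₂) :
    eIntegral P h₁ = eIntegral P h₂ := by
  have hpos : ∫⁻ x, posE (h₁ x) ∂P = ∫⁻ x, posE (h₂ x) ∂P :=
    lintegral_congr_ae (h.mono fun x hx => by simp only [hx])
  have hneg : ∫⁻ x, posE (-h₁ x) ∂P = ∫⁻ x, posE (-h₂ x) ∂P :=
    lintegral_congr_ae (h.mono fun x hx => by simp only [hx])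
  rw [eIntegral, eIntegral, hpos, hneg]

lemma eIntegral_coe {u : Ω → ℝ} (hu : Integrable u P) :
    eIntegral P (fun x => (u x : EReal)) = ∫ x, u x ∂P := by
  have hneg : ∫⁻ x, ENNReal.ofReal (-u x) ∂P < ⊤ := hu.neg.lintegral_lt_top
  simp only [eIntegral, ← EReal.coe_neg, posE_coe]
  rw [integral_eq_lintegral_pos_part_sub_lintegral_neg_part hu, EReal.coe_sub,
    EReal.coe_ennreal_toReal hu.lintegral_lt_top.ne,
    EReal.coe_ennreal_toReal hneg.ne]

lemma integral_le_eIntegral {u : Ω → ℝ} {h : Ω → EReal} (hu : Integrable u P)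
    (hle : ∀ x, (u x : EReal) ≤ h x) : ∫ x, u x ∂P ≤ eIntegral P h :=
  eIntegral_coe hu ▸ eIntegral_mono hle

end eIntegral

lemma ConvexOn.exists_add_mul_sub_le {S : Set ℝ} {φ : ℝ → ℝ} (hφ : ConvexOn ℝ S φ) {x : ℝ}
    (hx : x ∈ interior S) : ∃ k, ∀ y ∈ S, φ x + k * (y - x) ≤ φ y := by
  refine ⟨derivWithin φ (Ioi x) x, fun y hy => ?_⟩
  rcases lt_trichotomy y x with hyx | rfl | hxy
  · have hslope := (hφ.slope_le_leftDeriv_of_mem_interior hy hx hyx).trans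
      (hφ.leftDeriv_le_rightDeriv_of_mem_interior hx)
    rw [slope_def_field, div_le_iff₀ (sub_pos.2 hyx)] at hslope
    linarith
  · simp
  · have hslope := hφ.rightDeriv_le_slope_of_mem_interior hx hy hxy
    rw [slope_def_field, le_div_iff₀ (sub_pos.2 hxy)] at hslope
    linarith

lemma ConcaveOn.exists_le_add_mul_sub {S : Set ℝ} {φ : ℝ → ℝ} (hφ : ConcaveOn ℝ S φ) {x : ℝ}
    (hx : x ∈ interior S) : ∃ k, ∀ y ∈ S, φ y ≤ φ x + k * (y - x) := by
  obtain ⟨k, hk⟩ := hφ.neg.exists_add_mul_sub_le hx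
  simp only [Pi.neg_apply] at hk
  exact ⟨-k, fun y hy => by linarith [hk y hy]⟩

namespace IsF1

variable {a b : EReal} {f : ℝ → EReal}

lemma coe_toReal (hf : IsF1 a b f) {x : ℝ} (hx : f x ≠ ⊤) : ((f x).toReal : EReal) = f x :=
  EReal.coe_toReal hx (hf.ne_bot x)

lemma one_ne_top (hf : IsF1 a b f) : f 1 ≠ ⊤ := by
  simp [hf.at_one]

lemma toReal_one (hf : IsF1 a b f) : (f 1).toReal = 0 := by
  simp [hf.at_one]

lemma nonneg_of_ne_top (hf : IsF1 a b f) (ha : 0 ≤ a) {x : ℝ} (hx : f x ≠ ⊤) : 0 ≤ x := by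
  by_contra! hneg
  exact hx (hf.top_outside x (.inl (lt_of_lt_of_le (by exact_mod_cast hneg) ha)))

lemma one_mem_interior_dom (hf : IsF1 a b f) : (1 : ℝ) ∈ interior {x | f x ≠ ⊤} := by
  obtain ⟨α, haα, hα1⟩ := EReal.lt_iff_exists_real_btwn.1 hf.a_lt_one
  obtain ⟨β, h1β, hβb⟩ := EReal.lt_iff_exists_real_btwn.1 hf.one_lt_b
  have hsub : Ioo α β ⊆ {x | f x ≠ ⊤} := fun x hx => hf.finite_on x
    (haα.trans (EReal.coe_lt_coe_iff.2 hx.1)) ((EReal.coe_lt_coe_iff.2 hx.2).trans hβb)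
  refine interior_mono hsub ?_
  rw [interior_Ioo]
  exact ⟨by exact_mod_cast hα1, by exact_mod_cast h1β⟩

lemma convex_combination (hf : IsF1 a b f) {x y t s : ℝ} (hx : f x ≠ ⊤) (hy : f y ≠ ⊤)
    (ht : 0 ≤ t) (hs : 0 ≤ s) (hts : t + s = 1) :
    f (t * x + s * y) ≠ ⊤ ∧
      (f (t * x + s * y)).toReal ≤ t * (f x).toReal + s * (f y).toReal := by
  rcases ht.eq_or_lt with rfl | ht
  · obtain rfl : s = 1 := by linarith
    simpa using hy
  rcases hs.eq_or_lt with rfl | hs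
  · obtain rfl : t = 1 := by linarith
    simpa using hx
  have key := hf.convex x y t ht (by linarith)
  rw [show 1 - t = s by linarith, ← hf.coe_toReal hx, ← hf.coe_toReal hy] at key
  norm_cast at key
  exact ⟨ne_top_of_le_ne_top (EReal.coe_ne_top _) key,
    EReal.toReal_le_toReal key (hf.ne_bot _) (EReal.coe_ne_top _)⟩

lemma convexOn_toReal (hf : IsF1 a b f) : ConvexOn ℝ {x | f x ≠ ⊤} (fun x => (f x).toReal) :=
  ⟨fun _ hx _ hy _ _ ht hs hts => (hf.convex_combination hx hy ht hs hts).1,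
    fun _ hx _ hy _ _ ht hs hts => (hf.convex_combination hx hy ht hs hts).2⟩

lemma exists_mul_sub_one_le (hf : IsF1 a b f) :
    ∃ k : ℝ, ∀ x, f x ≠ ⊤ → k * (x - 1) ≤ (f x).toReal := by
  obtain ⟨k, hk⟩ := hf.convexOn_toReal.exists_add_mul_sub_le hf.one_mem_interior_dom
  exact ⟨k, fun x hx => by simpa [hf.toReal_one] using hk x hx⟩

lemma coe_sub_le_fstar (hf : IsF1 a b f) {x : ℝ} (hx : f x ≠ ⊤) (y : ℝ) :
    ((x * y - (f x).toReal : ℝ) : EReal) ≤ fstar f y := by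
  rw [EReal.coe_sub, hf.coe_toReal hx]
  exact le_iSup (fun x : ℝ => ((x * y : ℝ) : EReal) - f x) x

lemma fstar_ne_bot (hf : IsF1 a b f) (y : ℝ) : fstar f y ≠ ⊥ :=
  ne_bot_of_le_ne_bot (EReal.coe_ne_bot _) (hf.coe_sub_le_fstar hf.one_ne_top y)

lemma exists_lt_of_lt_fstar (hf : IsF1 a b f) {r y : ℝ} (hr : (r : EReal) < fstar f y) :
    ∃ x, f x ≠ ⊤ ∧ r < x * y - (f x).toReal := by
  obtain ⟨x, hx⟩ := lt_iSup_iff.1 hr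
  have hfx : f x ≠ ⊤ := by
    rintro hfx
    simp [hfx] at hx
  refine ⟨x, hfx, ?_⟩
  rwa [← hf.coe_toReal hfx, ← EReal.coe_sub, EReal.coe_lt_coe_iff] at hx

lemma fstar_mono (hf : IsF1 a b f) (ha : 0 ≤ a) : Monotone (fstar f) := by
  intro y y' hyy'
  refine iSup_le fun x => ?_
  by_cases hx : f x = ⊤
  · simp [hx]
  refine le_trans ?_ (le_iSup (fun x : ℝ => ((x * y' : ℝ) : EReal) - f x) x)
  exact EReal.sub_le_sub
    (EReal.coe_le_coe_iff.2 (mul_le_mul_of_nonneg_left hyy' (hf.nonneg_of_ne_top ha hx))) le_rfl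

end IsF1

section FiniteDuality

variable {ι : Type*} {a b : EReal} {f : ℝ → EReal} {I : Finset ι} {p y : ι → ℝ}

def primalObjective (f : ℝ → EReal) (I : Finset ι) (p y τ : ι → ℝ) : ℝ :=
  ∑ n ∈ I, p n * (τ n * y n - (f (τ n)).toReal)

def primalFeasible (f : ℝ → EReal) (I : Finset ι) (p : ι → ℝ) (c : ℝ) : Set (ι → ℝ) :=
  {τ | (∀ n ∈ I, f (τ n) ≠ ⊤) ∧ ∑ n ∈ I, p n * τ n = c}

noncomputable def primalValue (f : ℝ → EReal) (I : Finset ι) (p y : ι → ℝ) (c : ℝ) : ℝ :=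
  sSup (primalObjective f I p y '' primalFeasible f I p c)

lemma const_mem_primalFeasible (hp : ∑ n ∈ I, p n = 1) {t : ℝ} (ht : f t ≠ ⊤) :
    (fun _ => t) ∈ primalFeasible f I p t :=
  ⟨fun _ _ => ht, by rw [← Finset.sum_mul, hp, one_mul]⟩

section FstarSum

variable {z : ι → ℝ} {M : ℝ}

lemma IsF1.sum_le_of_lt_fstar (hf : IsF1 a b f) (hp0 : ∀ n, 0 ≤ p n)
    (hM : ∀ τ : ι → ℝ, (∀ n ∈ I, f (τ n) ≠ ⊤) → primalObjective f I p z τ ≤ M)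
    {r : ι → ℝ} (hr : ∀ n ∈ I, (r n : EReal) < fstar f (z n)) : ∑ n ∈ I, p n * r n ≤ M := by
  choose! τ hτ hrτ using fun n (hn : n ∈ I) => hf.exists_lt_of_lt_fstar (hr n hn)
  refine le_trans (Finset.sum_le_sum fun n hn => ?_) (hM τ hτ)
  exact mul_le_mul_of_nonneg_left (hrτ n hn).le (hp0 n)

lemma IsF1.fstar_ne_top_of_forall_primalObjective_le (hf : IsF1 a b f) (hp0 : ∀ n, 0 ≤ p n)
    (hM : ∀ τ : ι → ℝ, (∀ n ∈ I, f (τ n) ≠ ⊤) → primalObjective f I p z τ ≤ M)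
    {n : ι} (hn : n ∈ I) (hpn : p n ≠ 0) : fstar f (z n) ≠ ⊤ := by
  intro htop
  set r₀ : ι → ℝ := fun m => (fstar f (z m)).toReal - 1
  set R := (M + 1 - ∑ m ∈ I.erase n, p m * r₀ m) / p n
  have hr : ∀ m ∈ I, ((Function.update r₀ n R m : ℝ) : EReal) < fstar f (z m) := by
    intro m _
    by_cases hmn : m = n
    · subst hmn
      simp [htop]
    · rw [Function.update_of_ne hmn]
      exact EReal.coe_toReal_sub_lt (hf.fstar_ne_bot (z m)) one_pos
  have hsum := hf.sum_le_of_lt_fstar hp0 hM hr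
  rw [← Finset.add_sum_erase _ _ hn, Finset.sum_congr rfl fun m hm => by
    rw [Function.update_of_ne (Finset.ne_of_mem_erase hm)]] at hsum
  have hR : p n * R = M + 1 - ∑ m ∈ I.erase n, p m * r₀ m := mul_div_cancel₀ _ hpn
  simp only [Function.update_self] at hsum
  linarith

lemma IsF1.sum_toReal_fstar_le (hf : IsF1 a b f) (hp0 : ∀ n, 0 ≤ p n)
    (hp : ∑ n ∈ I, p n = 1)
    (hM : ∀ τ : ι → ℝ, (∀ n ∈ I, f (τ n) ≠ ⊤) → primalObjective f I p z τ ≤ M) :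
    ∑ n ∈ I, p n * (fstar f (z n)).toReal ≤ M := by
  refine _root_.le_of_forall_pos_le_add fun ε hε => ?_
  have := hf.sum_le_of_lt_fstar hp0 hM (r := fun n => (fstar f (z n)).toReal - ε)
    fun n _ => EReal.coe_toReal_sub_lt (hf.fstar_ne_bot _) hε
  simp only [mul_sub, Finset.sum_sub_distrib, ← Finset.sum_mul, hp, one_mul] at this
  linarith

end FstarSum

lemma IsF1.bddAbove_primalObjective (hf : IsF1 a b f) (ha : 0 ≤ a) (hp0 : ∀ n, 0 ≤ p n)
    (hp : ∑ n ∈ I, p n = 1) (c : ℝ) :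
    BddAbove (primalObjective f I p y '' primalFeasible f I p c) := by
  obtain ⟨k, hk⟩ := hf.exists_mul_sub_one_le
  set C := ∑ n ∈ I, |y n|
  refine ⟨k + (C - k) * c, ?_⟩
  rintro _ ⟨τ, ⟨hτ, rfl⟩, rfl⟩
  calc primalObjective f I p y τ ≤ ∑ n ∈ I, p n * (k + (C - k) * τ n) := by
        refine Finset.sum_le_sum fun n hn => mul_le_mul_of_nonneg_left ?_ (hp0 n)
        have hyC : y n ≤ C :=
          (le_abs_self _).trans (Finset.single_le_sum (fun m _ => abs_nonneg (y m)) hn)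
        nlinarith [hk _ (hτ n hn), hf.nonneg_of_ne_top ha (hτ n hn)]
    _ = k * ∑ n ∈ I, p n + (C - k) * ∑ n ∈ I, p n * τ n := by
        rw [Finset.mul_sum, Finset.mul_sum, ← Finset.sum_add_distrib]
        exact Finset.sum_congr rfl fun n _ => by ring
    _ = k + (C - k) * ∑ n ∈ I, p n * τ n := by rw [hp, mul_one]

lemma IsF1.primalObjective_le_primalValue (hf : IsF1 a b f) (ha : 0 ≤ a) (hp0 : ∀ n, 0 ≤ p n)
    (hp : ∑ n ∈ I, p n = 1) {c : ℝ} {τ : ι → ℝ} (hτ : τ ∈ primalFeasible f I p c) :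
    primalObjective f I p y τ ≤ primalValue f I p y c :=
  le_csSup (hf.bddAbove_primalObjective ha hp0 hp c) (mem_image_of_mem _ hτ)

lemma IsF1.convex_combination_mem_primalFeasible (hf : IsF1 a b f) {c d t s : ℝ}
    {τ₁ τ₂ : ι → ℝ} (h₁ : τ₁ ∈ primalFeasible f I p c) (h₂ : τ₂ ∈ primalFeasible f I p d)
    (ht : 0 ≤ t) (hs : 0 ≤ s) (hts : t + s = 1) :
    (fun n => t * τ₁ n + s * τ₂ n) ∈ primalFeasible f I p (t * c + s * d) := by
  refine ⟨fun n hn => (hf.convex_combination (h₁.1 n hn) (h₂.1 n hn) ht hs hts).1, ?_⟩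
  rw [← h₁.2, ← h₂.2, Finset.mul_sum, Finset.mul_sum, ← Finset.sum_add_distrib]
  exact Finset.sum_congr rfl fun n _ => by ring

lemma IsF1.primalObjective_convex_combination (hf : IsF1 a b f) (hp0 : ∀ n, 0 ≤ p n)
    {t s : ℝ} {τ₁ τ₂ : ι → ℝ} (h₁ : ∀ n ∈ I, f (τ₁ n) ≠ ⊤) (h₂ : ∀ n ∈ I, f (τ₂ n) ≠ ⊤)
    (ht : 0 ≤ t) (hs : 0 ≤ s) (hts : t + s = 1) :
    t * primalObjective f I p y τ₁ + s * primalObjective f I p y τ₂ ≤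
      primalObjective f I p y (fun n => t * τ₁ n + s * τ₂ n) := by
  rw [primalObjective, primalObjective, Finset.mul_sum, Finset.mul_sum, ← Finset.sum_add_distrib]
  refine Finset.sum_le_sum fun n hn => ?_
  have := mul_le_mul_of_nonneg_left
    (hf.convex_combination (h₁ n hn) (h₂ n hn) ht hs hts).2 (hp0 n)
  nlinarith

lemma IsF1.concaveOn_primalValue (hf : IsF1 a b f) (ha : 0 ≤ a) (hp0 : ∀ n, 0 ≤ p n)
    (hp : ∑ n ∈ I, p n = 1) :
    ConcaveOn ℝ {c | (primalFeasible f I p c).Nonempty} (primalValue f I p y) := by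
  refine ⟨fun c ⟨τ₁, h₁⟩ d ⟨τ₂, h₂⟩ t s ht hs hts =>
    ⟨_, hf.convex_combination_mem_primalFeasible h₁ h₂ ht hs hts⟩, ?_⟩
  intro c hc d hd t s ht hs hts
  simp only [smul_eq_mul]
  refine _root_.le_of_forall_pos_le_add fun ε hε => ?_
  obtain ⟨_, ⟨τ₁, h₁, rfl⟩, hτ₁⟩ := exists_lt_of_lt_csSup (Nonempty.image _ hc)
    (sub_lt_self (primalValue f I p y c) hε)
  obtain ⟨_, ⟨τ₂, h₂, rfl⟩, hτ₂⟩ := exists_lt_of_lt_csSup (Nonempty.image _ hd)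
    (sub_lt_self (primalValue f I p y d) hε)
  have hle := hf.primalObjective_convex_combination (y := y) hp0 h₁.1 h₂.1 ht hs hts
  have hV := hf.primalObjective_le_primalValue (y := y) ha hp0 hp
    (hf.convex_combination_mem_primalFeasible h₁ h₂ ht hs hts)
  nlinarith

lemma IsF1.exists_forall_primalObjective_sub_le (hf : IsF1 a b f) (ha : 0 ≤ a)
    (hp0 : ∀ n, 0 ≤ p n) (hp : ∑ n ∈ I, p n = 1) :
    ∃ ν : ℝ, ∀ τ : ι → ℝ, (∀ n ∈ I, f (τ n) ≠ ⊤) →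
      primalObjective f I p (fun n => y n - ν) τ ≤ primalValue f I p y 1 - ν := by
  have hdom : {x | f x ≠ ⊤} ⊆ {c | (primalFeasible f I p c).Nonempty} :=
    fun t ht => ⟨_, const_mem_primalFeasible hp ht⟩
  obtain ⟨ν, hν⟩ := (hf.concaveOn_primalValue ha hp0 hp).exists_le_add_mul_sub
    (interior_mono hdom hf.one_mem_interior_dom)
  refine ⟨ν, fun τ hτ => ?_⟩
  have hmem : τ ∈ primalFeasible f I p (∑ n ∈ I, p n * τ n) := ⟨hτ, rfl⟩
  have hobj := hf.primalObjective_le_primalValue (y := y) ha hp0 hp hmem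
  have hsuper := hν _ ⟨τ, hmem⟩
  have hsplit : primalObjective f I p (fun n => y n - ν) τ =
      primalObjective f I p y τ - ν * ∑ n ∈ I, p n * τ n := by
    rw [primalObjective, primalObjective, Finset.mul_sum, ← Finset.sum_sub_distrib]
    exact Finset.sum_congr rfl fun n _ => by ring
  linarith

theorem IsF1.exists_dual_le_primalObjective_add (hf : IsF1 a b f) (ha : 0 ≤ a)
    (hp0 : ∀ n, 0 ≤ p n) (hp : ∑ n ∈ I, p n = 1) {δ : ℝ} (hδ : 0 < δ) :
    ∃ (ν : ℝ) (τ : ι → ℝ), τ ∈ primalFeasible f I p 1 ∧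
      (∀ n ∈ I, p n ≠ 0 → fstar f (y n - ν) ≠ ⊤) ∧
      ν + ∑ n ∈ I, p n * (fstar f (y n - ν)).toReal ≤ primalObjective f I p y τ + δ := by
  obtain ⟨ν, hν⟩ := hf.exists_forall_primalObjective_sub_le (y := y) ha hp0 hp
  obtain ⟨_, ⟨τ, hτ, rfl⟩, hτδ⟩ := exists_lt_of_lt_csSup
    (Nonempty.image (primalObjective f I p y) ⟨_, const_mem_primalFeasible hp hf.one_ne_top⟩)
    (sub_lt_self (primalValue f I p y 1) hδ)
  refine ⟨ν, τ, hτ, fun n hn hpn => hf.fstar_ne_top_of_forall_primalObjective_le hp0 hν hn hpn, ?_⟩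
  linarith [hf.sum_toReal_fstar_le hp0 hp hν]

end FiniteDuality

section StepFunctions

variable {Ω ι : Type*} [MeasurableSpace Ω] [MeasurableSpace ι] [MeasurableSingletonClass ι]
  {P : Measure Ω} {idx : Ω → ι} {I : Finset ι}

omit [MeasurableSpace Ω] [MeasurableSpace ι] [MeasurableSingletonClass ι] in
lemma comp_eq_sum_indicator (hI : ∀ x, idx x ∈ I) (F : ι → ℝ) :
    (fun x => F (idx x)) = fun x => ∑ n ∈ I, (idx ⁻¹' {n}).indicator (fun _ => F n) x := by
  funext x
  rw [Finset.sum_eq_single_of_mem (idx x) (hI x) fun n _ hn =>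
    indicator_of_notMem (fun h => hn h.symm) _]
  simp

lemma integrable_comp_of_forall_mem [IsFiniteMeasure P] (hidx : Measurable idx)
    (hI : ∀ x, idx x ∈ I) (F : ι → ℝ) : Integrable (fun x => F (idx x)) P := by
  rw [comp_eq_sum_indicator hI]
  exact integrable_finsetSum _ fun n _ =>
    (integrable_const (F n)).indicator (hidx (measurableSet_singleton n))

lemma integral_comp_eq_sum [IsFiniteMeasure P] (hidx : Measurable idx) (hI : ∀ x, idx x ∈ I)
    (F : ι → ℝ) : ∫ x, F (idx x) ∂P = ∑ n ∈ I, P.real (idx ⁻¹' {n}) * F n := by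
  rw [comp_eq_sum_indicator hI, integral_finsetSum _ fun n _ =>
    (integrable_const (F n)).indicator (hidx (measurableSet_singleton n))]
  exact Finset.sum_congr rfl fun n _ =>
    integral_indicator_const _ (hidx (measurableSet_singleton n))

lemma eIntegral_comp_eq_sum [IsFiniteMeasure P] (hidx : Measurable idx) (hI : ∀ x, idx x ∈ I)
    {F : ι → EReal} (hbot : ∀ n, F n ≠ ⊥)
    (htop : ∀ n ∈ I, P.real (idx ⁻¹' {n}) ≠ 0 → F n ≠ ⊤) :
    eIntegral P (fun x => F (idx x)) = ∑ n ∈ I, P.real (idx ⁻¹' {n}) * (F n).toReal := by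
  have hatoms : ∀ n ∈ I, ∀ᵐ x ∂P, idx x = n → F n ≠ ⊤ := by
    intro n hn
    by_cases hn0 : P.real (idx ⁻¹' {n}) = 0
    · filter_upwards [measure_eq_zero_iff_ae_notMem.1 ((measureReal_eq_zero_iff).1 hn0)]
        with x hx hxn using absurd hxn hx
    · exact ae_of_all _ fun _ _ => htop n hn hn0
  have hae : (fun x => F (idx x)) =ᵐ[P] fun x => ((F (idx x)).toReal : EReal) := by
    filter_upwards [(eventually_all_finset I).2 hatoms] with x hx
    exact (EReal.coe_toReal (hx _ (hI x) rfl) (hbot _)).symm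
  rw [eIntegral_congr_ae hae,
    eIntegral_coe (integrable_comp_of_forall_mem hidx hI fun n => (F n).toReal),
    integral_comp_eq_sum hidx hI fun n => (F n).toReal]

end StepFunctions

section Density

variable {Ω : Type*} [MeasurableSpace Ω] {P : Measure Ω} {φ : Ω → ℝ}

lemma integral_withDensity_ofReal (hφ0 : ∀ x, 0 ≤ φ x) (hφ : AEMeasurable φ P) (g : Ω → ℝ) :
    ∫ x, g x ∂P.withDensity (fun x => ENNReal.ofReal (φ x)) = ∫ x, φ x * g x ∂P := by
  rw [integral_withDensity_eq_integral_toReal_smul₀ hφ.ennreal_ofReal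
    (ae_of_all _ fun _ => ENNReal.ofReal_lt_top)]
  simp only [ENNReal.toReal_ofReal (hφ0 _), smul_eq_mul]

lemma isProbabilityMeasure_withDensity_ofReal (hφ0 : ∀ x, 0 ≤ φ x) (hφ : Integrable φ P)
    (hφ1 : ∫ x, φ x ∂P = 1) :
    IsProbabilityMeasure (P.withDensity fun x => ENNReal.ofReal (φ x)) := by
  constructor
  rw [withDensity_apply _ MeasurableSet.univ, Measure.restrict_univ,
    ← ofReal_integral_eq_lintegral_ofReal hφ (ae_of_all _ hφ0), hφ1, ENNReal.ofReal_one]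

end Density

lemma MeasureTheory.Integrable.mul_of_mem_Mb {Ω : Type*} [MeasurableSpace Ω] {P : Measure Ω}
    {φ g : Ω → ℝ} (hφ : Integrable φ P) (hg : g ∈ Mb Ω) : Integrable (fun x => φ x * g x) P :=
  let ⟨hgm, _, hgC⟩ := hg
  hφ.mul_bdd hgm.aestronglyMeasurable (ae_of_all _ fun x => (Real.norm_eq_abs _).trans_le (hgC x))

section Divergence

variable {Ω : Type*} [MeasurableSpace Ω] {P : Measure Ω} {a b : EReal} {f : ℝ → EReal}
  {Γ : Set (Ω → ℝ)}

lemma IsF1.LambdaF_le_of_le_add (hf : IsF1 a b f) (ha : 0 ≤ a) {g h : Ω → ℝ} {ε : ℝ}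
    (hgh : ∀ x, g x ≤ h x + ε) (ν : ℝ) :
    LambdaF f P g ≤ ((ν + ε : ℝ) : EReal) + eIntegral P (fun x => fstar f (h x - ν)) :=
  (iInf_le _ (ν + ε)).trans <| add_le_add le_rfl
    (eIntegral_mono fun x => hf.fstar_mono ha (by linarith [hgh x]))

lemma IsF1.fGammaDiv_withDensity_le (hf : IsF1 a b f) (hΓ : Γ ⊆ Mb Ω) {φ : Ω → ℝ}
    (hφ0 : ∀ x, 0 ≤ φ x) (hφ : Integrable φ P) (hφ1 : ∫ x, φ x ∂P = 1)
    (hfφ : ∀ x, f (φ x) ≠ ⊤) (hfφi : Integrable (fun x => (f (φ x)).toReal) P) :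
    fGammaDiv f Γ (P.withDensity fun x => ENNReal.ofReal (φ x)) P ≤
      ∫ x, (f (φ x)).toReal ∂P := by
  refine iSup₂_le fun g hg => EReal.coe_sub_le_of_coe_sub_le (le_iInf fun ν => ?_)
  have hφg := hφ.mul_of_mem_Mb (hΓ hg)
  have hu : Integrable (fun x => φ x * g x - ν * φ x - (f (φ x)).toReal) P :=
    (hφg.sub (hφ.const_mul ν)).sub hfφi
  set EQ := ∫ x, g x ∂P.withDensity (fun x => ENNReal.ofReal (φ x))
  set D := ∫ x, (f (φ x)).toReal ∂P
  have hint : ∫ x, (φ x * g x - ν * φ x - (f (φ x)).toReal) ∂P = EQ - ν - D := by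
    rw [integral_sub (f := fun x => φ x * g x - ν * φ x) (hφg.sub (hφ.const_mul ν)) hfφi,
      integral_sub hφg (hφ.const_mul ν), integral_const_mul, hφ1, mul_one,
      ← integral_withDensity_ofReal hφ0 hφ.aemeasurable]
  have hyoung := integral_le_eIntegral hu fun x => by
    simpa [mul_sub, mul_comm] using hf.coe_sub_le_fstar (hfφ x) (g x - ν)
  rw [hint] at hyoung
  calc (EQ : EReal) - D = (ν : EReal) + ((EQ - ν - D : ℝ) : EReal) := by norm_cast; ring
    _ ≤ _ := add_le_add le_rfl hyoung

end Divergence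

lemma floor_div_mul_le (t : ℝ) {ε : ℝ} (hε : 0 < ε) : (⌊t / ε⌋ : ℝ) * ε ≤ t :=
  (le_div_iff₀ hε).1 (Int.floor_le _)

lemma lt_floor_div_mul_add (t : ℝ) {ε : ℝ} (hε : 0 < ε) : t < (⌊t / ε⌋ : ℝ) * ε + ε := by
  have := (div_lt_iff₀ hε).1 (Int.lt_floor_add_one (t / ε))
  linarith

section Duality

variable {Ω : Type*} [MeasurableSpace Ω] {P : Measure Ω} [IsProbabilityMeasure P] {a b : EReal}
  {f : ℝ → EReal} {Γ : Set (Ω → ℝ)} {g : Ω → ℝ}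

lemma IsF1.exists_LambdaF_le_of_step (hf : IsF1 a b f) (ha : 0 ≤ a) (hΓ : Γ ⊆ Mb Ω)
    (hg : g ∈ Mb Ω) {idx : Ω → ℤ} (hidx : Measurable idx) {I : Finset ℤ} (hI : ∀ x, idx x ∈ I)
    {y : ℤ → ℝ} {ε : ℝ} (hε : 0 < ε) (hyg : ∀ x, y (idx x) ≤ g x)
    (hgy : ∀ x, g x ≤ y (idx x) + ε) :
    ∃ Q : Measure Ω, IsProbabilityMeasure Q ∧
      LambdaF f P g ≤ ((∫ x, g x ∂Q : ℝ) : EReal) - fGammaDiv f Γ Q P + ((2 * ε : ℝ) : EReal) := by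
  set p : ℤ → ℝ := fun n => P.real (idx ⁻¹' {n})
  have hp : ∑ n ∈ I, p n = 1 := by
    simpa using (integral_comp_eq_sum (P := P) hidx hI fun _ => (1 : ℝ)).symm
  obtain ⟨ν, τ, ⟨hτ, hτ1⟩, hfin, hdual⟩ :=
    hf.exists_dual_le_primalObjective_add (y := y) ha (fun _ => measureReal_nonneg) hp hε
  have hφ0 : ∀ x, 0 ≤ τ (idx x) := fun x => hf.nonneg_of_ne_top ha (hτ _ (hI x))
  have hφ := integrable_comp_of_forall_mem (P := P) hidx hI τ
  have hφ1 : ∫ x, τ (idx x) ∂P = 1 := by rw [integral_comp_eq_sum hidx hI]; exact hτ1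
  refine ⟨_, isProbabilityMeasure_withDensity_ofReal hφ0 hφ hφ1, ?_⟩
  have hΛ := hf.LambdaF_le_of_le_add (P := P) ha hgy ν
  rw [eIntegral_comp_eq_sum hidx hI (fun n => hf.fstar_ne_bot _) hfin] at hΛ
  have hD := hf.fGammaDiv_withDensity_le hΓ hφ0 hφ hφ1 (fun x => hτ _ (hI x))
    (integrable_comp_of_forall_mem hidx hI fun n => (f (τ n)).toReal)
  rw [integral_comp_eq_sum hidx hI fun n => (f (τ n)).toReal] at hD
  have hE : ∑ n ∈ I, p n * (τ n * y n) ≤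
      ∫ x, g x ∂P.withDensity fun x => ENNReal.ofReal (τ (idx x)) := by
    rw [integral_withDensity_ofReal hφ0 hφ.aemeasurable,
      ← integral_comp_eq_sum hidx hI fun n => τ n * y n]
    exact integral_mono (integrable_comp_of_forall_mem hidx hI fun n => τ n * y n)
      (hφ.mul_of_mem_Mb hg)
      fun x => mul_le_mul_of_nonneg_left (hyg x) (hφ0 x)
  have hobj : primalObjective f I p y τ =
      ∑ n ∈ I, p n * (τ n * y n) - ∑ n ∈ I, p n * (f (τ n)).toReal := by
    rw [primalObjective, ← Finset.sum_sub_distrib]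
    exact Finset.sum_congr rfl fun n _ => mul_sub _ _ _
  calc LambdaF f P g ≤ ((ν + ε + ∑ n ∈ I, p n * (fstar f (y n - ν)).toReal : ℝ) : EReal) := by
        exact_mod_cast hΛ
    _ ≤ ((∫ x, g x ∂P.withDensity fun x => ENNReal.ofReal (τ (idx x)) : ℝ) : EReal) -
          ((∑ n ∈ I, p n * (f (τ n)).toReal : ℝ) : EReal) + ((2 * ε : ℝ) : EReal) := by
        rw [← EReal.coe_sub, ← EReal.coe_add, EReal.coe_le_coe_iff]
        linarith
    _ ≤ _ := add_le_add (EReal.sub_le_sub le_rfl hD) le_rfl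

lemma IsF1.exists_LambdaF_le (hf : IsF1 a b f) (ha : 0 ≤ a) (hΓ : Γ ⊆ Mb Ω) (hg : g ∈ Γ)
    {ε : ℝ} (hε : 0 < ε) :
    ∃ Q : Measure Ω, IsProbabilityMeasure Q ∧
      LambdaF f P g ≤ ((∫ x, g x ∂Q : ℝ) : EReal) - fGammaDiv f Γ Q P + (ε : EReal) := by
  obtain ⟨hgm, C, hgC⟩ := hΓ hg
  have hε2 : 0 < ε / 2 := half_pos hε
  have hI : ∀ x, ⌊g x / (ε / 2)⌋ ∈ Finset.Icc ⌊-C / (ε / 2)⌋ ⌊C / (ε / 2)⌋ := fun x =>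
    Finset.mem_Icc.2
      ⟨Int.floor_le_floor (div_le_div_of_nonneg_right (abs_le.1 (hgC x)).1 hε2.le),
        Int.floor_le_floor (div_le_div_of_nonneg_right (abs_le.1 (hgC x)).2 hε2.le)⟩
  obtain ⟨Q, hQ, hle⟩ := hf.exists_LambdaF_le_of_step (P := P) ha hΓ (hΓ hg)
    (hgm.div_const _).floor hI (y := fun n => n * (ε / 2)) hε2
    (fun x => floor_div_mul_le (g x) hε2) (fun x => (lt_floor_div_mul_add (g x) hε2).le)
  exact ⟨Q, hQ, by rwa [mul_div_cancel₀ _ two_ne_zero] at hle⟩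

end Duality

theorem stmt6_general {Ω : Type*} [MeasurableSpace Ω] (a b : EReal) (f : ℝ → EReal)
    (hf : IsF1 a b f) (ha : (0 : EReal) ≤ a)
    (P : Measure Ω) [IsProbabilityMeasure P]
    (Γ : Set (Ω → ℝ)) (hΓ : Γ ⊆ Mb Ω)
    (g : Ω → ℝ) (hg : g ∈ Γ) :
    (⨆ Q ∈ {Q : Measure Ω | IsProbabilityMeasure Q},
      (((∫ x, g x ∂Q : ℝ) : EReal) - fGammaDiv f Γ Q P))
    = LambdaF f P g := by
  apply le_antisymm
  · exact iSup₂_le fun Q _ => EReal.coe_sub_le_of_coe_sub_le (le_iSup₂_of_le g hg le_rfl)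
  · refine EReal.le_of_forall_pos_le_add_coe fun ε hε => ?_
    obtain ⟨Q, hQ, hle⟩ := hf.exists_LambdaF_le (P := P) ha hΓ hg hε
    exact hle.trans (add_le_add (le_iSup₂_of_le Q hQ le_rfl) le_rfl)

/-- For `f ∈ F₁(a,b)` with `a ≥ 0`, `P` a probability measure and
nonempty `Γ ⊆ M_b(Ω)`, for every `g ∈ Γ`:
`sup_{Q probability measure} {E_Q[g] - D_f^Γ(Q‖P)} = Λ_f^P[g]`. -/
theorem stmt6 {Ω : Type*} [MeasurableSpace Ω] (a b : EReal) (f : ℝ → EReal)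
    (hf : IsF1 a b f) (ha : (0 : EReal) ≤ a)
    (P : Measure Ω) [IsProbabilityMeasure P]
    (Γ : Set (Ω → ℝ)) (hΓ : Γ ⊆ Mb Ω) (hne : Γ.Nonempty)
    (g : Ω → ℝ) (hg : g ∈ Γ) :
    (⨆ Q ∈ {Q : Measure Ω | IsProbabilityMeasure Q},
      (((∫ x, g x ∂Q : ℝ) : EReal) - fGammaDiv f Γ Q P))
    = LambdaF f P g :=
  stmt6_general a b f hf ha P Γ hΓ g hg
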